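/- arXiv:2601.20762 — 4 statements merged into one kernel-verified Lean document; each statement's English description precedes it below -/
import Mathlib

section
/- Let ν > 0, r > 0 and t ∈ ℝ with t ≤ 1. Then there exists a unique λ ≥ 0 satisfying the equation t/r + √(νλ) = e^{−√(νλ)·r}/r, and it is given explicitly by λ = (W(e^t) − t)² / (ν r²). Moreover, this λ is strictly positive if and only if t < 1. -/
/-- Let ν > 0, r > 0 and t ∈ ℝ with t ≤ 1. Then there exists a unique λ ≥ 0
satisfying the equation t/r + √(νλ) = e^{−√(νλ)·r}/r, and it is given explicitly by
λ = (W(e^t) − t)² / (ν r²); here `w = W(e^t)` is encoded as the unique element of [−1, ∞)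
with w·e^w = e^t. Moreover, this λ is strictly positive if and only if t < 1. -/
theorem stmt0 (ν r t : ℝ) (hν : 0 < ν) (hr : 0 < r) (ht : t ≤ 1)
    (w : ℝ) (hw1 : -1 ≤ w) (hw2 : w * Real.exp w = Real.exp t) :
    (∃! lam : ℝ, 0 ≤ lam ∧
      t / r + Real.sqrt (ν * lam) = Real.exp (-(Real.sqrt (ν * lam)) * r) / r) ∧
    (0 ≤ (w - t) ^ 2 / (ν * r ^ 2) ∧
      t / r + Real.sqrt (ν * ((w - t) ^ 2 / (ν * r ^ 2))) =
        Real.exp (-(Real.sqrt (ν * ((w - t) ^ 2 / (ν * r ^ 2)))) * r) / r) ∧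
    (0 < (w - t) ^ 2 / (ν * r ^ 2) ↔ t < 1) := by
  have hwpos : 0 < w := by
    by_contra h
    push_neg at h
    nlinarith [Real.exp_pos w, Real.exp_pos t,
      mul_nonpos_of_nonpos_of_nonneg h (Real.exp_pos w).le]
  have hwe : Real.exp (t - w) = w := by
    rw [Real.exp_sub, ← hw2, mul_div_assoc, div_self (Real.exp_ne_zero w), mul_one]
  have hwt : t ≤ w := by
    by_contra h
    push_neg at h
    have h1 := Real.add_one_le_exp (t - w)
    linarith [hwe ▸ h1]
  set s : ℝ := w - t with hs_def
  have hs : 0 ≤ s := by simp [hs_def]; linarith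
  have hsqrt : Real.sqrt (ν * (s ^ 2 / (ν * r ^ 2))) = s / r := by
    have h1 : ν * (s ^ 2 / (ν * r ^ 2)) = (s / r) ^ 2 := by
      field_simp
    rw [h1, Real.sqrt_sq (by positivity)]
  have hB : t + s = Real.exp (-s) := by
    have : -s = t - w := by ring
    rw [this, hwe]; ring
  have hcand : t / r + Real.sqrt (ν * (s ^ 2 / (ν * r ^ 2))) =
      Real.exp (-(Real.sqrt (ν * (s ^ 2 / (ν * r ^ 2)))) * r) / r := by
    rw [hsqrt]
    have : -(s / r) * r = -s := by field_simp
    rw [this, ← hB]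
    field_simp
  refine ⟨⟨s ^ 2 / (ν * r ^ 2), ⟨by positivity, hcand⟩, ?_⟩, ⟨by positivity, hcand⟩, ?_⟩
  · rintro lam ⟨hlam, heq⟩
    set u := Real.sqrt (ν * lam) with hu_def
    have hu : 0 ≤ u := Real.sqrt_nonneg _
    have hu2 : u ^ 2 = ν * lam := Real.sq_sqrt (by positivity)
    have hA : t + u * r = Real.exp (-(u * r)) := by
      have h2 : (t / r + u) * r = (Real.exp (-u * r) / r) * r := by rw [heq]
      have h3 : (t / r + u) * r = t + u * r := by field_simp
      have h4 : (Real.exp (-u * r) / r) * r = Real.exp (-u * r) := by field_simp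
      rw [h3, h4] at h2
      rw [h2]; ring_nf
    have key : u * r = s := by
      rcases lt_trichotomy (u * r) s with h | h | h
      · have := Real.exp_lt_exp.mpr (show -s < -(u * r) by linarith)
        linarith
      · exact h
      · have := Real.exp_lt_exp.mpr (show -(u * r) < -s by linarith)
        linarith
    have hur : u = s / r := by
      field_simp at key ⊢
      linarith
    have : ν * lam = (s / r) ^ 2 := by rw [← hu2, hur]
    have hr2 : (s / r) ^ 2 = s ^ 2 / r ^ 2 := by ring
    rw [hr2] at this
    field_simp at this
    rw [eq_div_iff (by positivity)]
    linear_combination this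
  · constructor
    · intro h
      by_contra h1
      push_neg at h1
      have ht1 : t = 1 := le_antisymm ht h1
      have hw1' : w ≤ 1 := by
        by_contra h2
        push_neg at h2
        have : Real.exp (t - w) < 1 := by
          rw [Real.exp_lt_one_iff]; linarith
        linarith [hwe ▸ this]
      have hweq : w = t := le_antisymm (ht1 ▸ hw1') hwt
      rw [show s = 0 by simp [hs_def, hweq]] at h
      norm_num at h
    · intro h
      have hne : s ≠ 0 := by
        intro h0
        have hweq : w = t := by simp [hs_def] at h0; linarith
        rw [hweq] at hw2
        have : t = 1 := by
          have := Real.exp_pos t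
          nlinarith
        linarith
      positivity
end

section
/- Let β > 0, r₀ > 0, θ_β ∈ ℝ, and let a, b ∈ ℝ with (a, b) ≠ (0, 0). Set α := arctan(b/a) if a ≠ 0, and α := π/2 if a = 0. Let F : (0, ∞) → ℝ be continuous with F(λ) → 0 as λ → 0⁺. For n ∈ ℕ define λₙ⁰ := (2/r₀)·e^{(θ_β − α)/β}·e^{−nπ/β}. Then there exist n₀ ∈ ℕ and real numbers ηₙ ∈ (−π/2, π/2) for n ≥ n₀ such that ηₙ → 0 as n → ∞ and, setting λₙ := λₙ⁰·e^{ηₙ/β}, the equation −a·sin(θ_β − β·ln(λₙ r₀/2)) + b·cos(θ_β − β·ln(λₙ r₀/2)) = F(λₙ) holds for every n ≥ n₀. -/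
/-!
Let `α` be the phase angle of `(a, b)`, so that `-a sin α + b cos α = 0` and
`c := a cos α + b sin α ≠ 0`. Writing `λ = λₙ⁰ e^{t/β}`, the argument of the sine and cosine is
`α - t + nπ`, so the matching equation becomes `(-1)ⁿ c sin t = F(λₙ⁰ e^{t/β})`. Since `λₙ⁰ → 0`,
the right-hand side tends to `0` uniformly in `t ∈ [-π/2, π/2]`; once its maximum `Mₙ` is below
`|c|`, the intermediate value theorem yields a root `ηₙ` with `|ηₙ| ≤ arcsin (Mₙ / |c|) → 0`.
-/

open Filter Set Topology Real

noncomputable def phaseAngle (a b : ℝ) : ℝ :=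
  if a = 0 then π / 2 else arctan (b / a)

theorem neg_mul_sin_phaseAngle_add_mul_cos (a b : ℝ) :
    -a * sin (phaseAngle a b) + b * cos (phaseAngle a b) = 0 := by
  unfold phaseAngle
  split_ifs with ha
  · simp [ha]
  · rw [sin_arctan, cos_arctan]
    field_simp
    ring

theorem mul_cos_phaseAngle_add_mul_sin_ne_zero {a b : ℝ} (hab : (a, b) ≠ (0, 0)) :
    a * cos (phaseAngle a b) + b * sin (phaseAngle a b) ≠ 0 := by
  unfold phaseAngle
  split_ifs with ha
  · simpa [ha] using hab
  · rw [sin_arctan, cos_arctan]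
    field_simp
    positivity

theorem neg_mul_sin_add_mul_cos_sub_add_nat_mul_pi {a b α : ℝ}
    (hα : -a * sin α + b * cos α = 0) (t : ℝ) (n : ℕ) :
    -a * sin (α - t + n * π) + b * cos (α - t + n * π) =
      (-1) ^ n * (a * cos α + b * sin α) * sin t := by
  rw [sin_add_nat_mul_pi, cos_add_nat_mul_pi, sin_sub, cos_sub]
  linear_combination (-1) ^ n * cos t * hα

theorem exists_mem_Icc_mul_sin_eq {d m : ℝ} {f : ℝ → ℝ} (hm : 0 ≤ m)
    (hf : ContinuousOn f (Icc (-m) m)) (hbound : ∀ t ∈ Icc (-m) m, |f t| ≤ |d| * sin m) :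
    ∃ t ∈ Icc (-m) m, d * sin t = f t := by
  have hle : -m ≤ m := by linarith
  have hl := abs_le.1 (hbound (-m) (left_mem_Icc.2 hle))
  have hr := abs_le.1 (hbound m (right_mem_Icc.2 hle))
  have h0 : (0 : ℝ) ∈ uIcc (d * sin (-m) - f (-m)) (d * sin m - f m) := by
    rw [sin_neg, mem_uIcc]
    rcases le_total 0 d with hd | hd
    · rw [abs_of_nonneg hd] at hl hr
      left; constructor <;> linarith
    · rw [abs_of_nonpos hd] at hl hr
      right; constructor <;> linarith
  have hg : ContinuousOn (fun t => d * sin t - f t) (uIcc (-m) m) := by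
    rw [uIcc_of_le hle]
    exact (continuous_sin.continuousOn.const_smul d).sub hf
  obtain ⟨t, ht, hgt⟩ := intermediate_value_uIcc hg h0
  rw [uIcc_of_le hle] at ht
  exact ⟨t, ht, sub_eq_zero.1 hgt⟩

theorem exists_tendsto_zero_bound_of_tendsto_uncurry {ι X : Type*} [TopologicalSpace X]
    {l : Filter ι} {s : Set X} (hs : IsCompact s) (hne : s.Nonempty) {f : ι → X → ℝ}
    (hf : ∀ i, ContinuousOn (f i) s) (hlim : Tendsto (Function.uncurry f) (l ×ˢ 𝓟 s) (𝓝 0)) :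
    ∃ M : ι → ℝ, Tendsto M l (𝓝 0) ∧ ∀ i, ∀ x ∈ s, |f i x| ≤ M i := by
  choose x hxs hmax using fun i => hs.exists_isMaxOn hne (hf i).abs
  refine ⟨fun i => |f i (x i)|, ?_, fun i y hy => hmax i hy⟩
  have hx : Tendsto (fun i => (i, x i)) l (l ×ˢ 𝓟 s) :=
    tendsto_id.prodMk (tendsto_principal.2 (Eventually.of_forall hxs))
  simpa using (hlim.comp hx).abs

theorem exists_seq_mul_sin_eq {f : ℕ → ℝ → ℝ} {d : ℕ → ℝ} {δ : ℝ} (hδ : 0 < δ)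
    (hd : ∀ n, δ ≤ |d n|) (hf : ∀ n, ContinuousOn (f n) (Icc (-(π / 2)) (π / 2)))
    (hlim : Tendsto (Function.uncurry f) (atTop ×ˢ 𝓟 (Icc (-(π / 2)) (π / 2))) (𝓝 0)) :
    ∃ (n₀ : ℕ) (η : ℕ → ℝ), (∀ n, n₀ ≤ n → η n ∈ Ioo (-(π / 2)) (π / 2)) ∧
      Tendsto η atTop (𝓝 0) ∧ ∀ n, n₀ ≤ n → d n * sin (η n) = f n (η n) := by
  have hzero : (0 : ℝ) ∈ Icc (-(π / 2)) (π / 2) := ⟨by linarith [pi_pos], by linarith [pi_pos]⟩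
  obtain ⟨M, hM, hfM⟩ :=
    exists_tendsto_zero_bound_of_tendsto_uncurry isCompact_Icc ⟨0, hzero⟩ hf hlim
  have hM_nonneg n : 0 ≤ M n := (abs_nonneg _).trans (hfM n 0 hzero)
  set m : ℕ → ℝ := fun n => arcsin (M n / δ)
  have hm : Tendsto m atTop (𝓝 0) := by
    simpa [m, Function.comp_def] using (continuous_arcsin.tendsto _).comp (hM.div_const δ)
  obtain ⟨n₀, hn₀⟩ := eventually_atTop.1 (hM.eventually_lt_const hδ)
  have hm_nonneg n : 0 ≤ m n := arcsin_nonneg.2 (div_nonneg (hM_nonneg n) hδ.le)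
  have hm_lt n (hn : n₀ ≤ n) : m n < π / 2 :=
    arcsin_lt_pi_div_two.2 ((div_lt_one hδ).2 (hn₀ n hn))
  have hroot n : ∃ t, n₀ ≤ n → t ∈ Icc (-m n) (m n) ∧ d n * sin t = f n t := by
    by_cases hn : n₀ ≤ n
    · have hsub : Icc (-m n) (m n) ⊆ Icc (-(π / 2)) (π / 2) :=
        Icc_subset_Icc (by linarith [hm_lt n hn]) (hm_lt n hn).le
      have hsin : M n = δ * sin (m n) := by
        rw [sin_arcsin (by linarith [div_nonneg (hM_nonneg n) hδ.le])
          ((div_le_one hδ).2 (hn₀ n hn).le)]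
        field_simp
      obtain ⟨t, ht, heq⟩ := exists_mem_Icc_mul_sin_eq (hm_nonneg n) ((hf n).mono hsub)
        fun t ht => (hfM n t (hsub ht)).trans <| hsin.trans_le <|
          mul_le_mul_of_nonneg_right (hd n) (sin_nonneg_of_nonneg_of_le_pi (hm_nonneg n)
            (by linarith [hm_lt n hn, pi_pos]))
      exact ⟨t, fun _ => ⟨ht, heq⟩⟩
    · exact ⟨0, fun h => absurd h hn⟩
  choose η hη using hroot
  refine ⟨n₀, η, fun n hn => ?_, ?_, fun n hn => (hη n hn).2⟩
  · obtain ⟨h₁, h₂⟩ := (hη n hn).1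
    exact ⟨by linarith [hm_lt n hn], by linarith [hm_lt n hn]⟩
  · refine squeeze_zero_norm' ?_ hm
    filter_upwards [eventually_ge_atTop n₀] with n hn
    exact abs_le.2 (hη n hn).1

theorem tendsto_exp_neg_nat_mul_pi_mul_exp {β : ℝ} (hβ : 0 < β) {s : Set ℝ} (hs : BddAbove s) :
    Tendsto (fun p : ℕ × ℝ => exp (-(p.1 : ℝ) * π / β) * exp (p.2 / β)) (atTop ×ˢ 𝓟 s) (𝓝 0) := by
  obtain ⟨C, hC⟩ := hs
  have hexp : Tendsto (fun n : ℕ => exp (-(n : ℝ) * π / β)) atTop (𝓝 0) := by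
    refine tendsto_exp_atBot.comp ?_
    have := (tendsto_natCast_atTop_atTop.atTop_mul_const pi_pos).atTop_div_const hβ
    exact (tendsto_neg_atTop_atBot.comp this).congr fun n => by simp [neg_mul, neg_div]
  refine squeeze_zero' (Eventually.of_forall fun p => by positivity) ?_
    ((hexp.comp tendsto_fst).mul_const (exp (C / β)) |>.trans (by simp))
  rw [eventually_prod_principal_iff]
  refine Eventually.of_forall fun n t ht => ?_
  dsimp only [Function.comp]
  gcongr
  exact hC ht

/-- Proposition 3.1 (existence part), stated abstractly.  With
α = arctan(b/a) (α = π/2 when a = 0) and λₙ⁰ = (2/r₀)e^{(θ_β−α)/β}e^{−nπ/β}, for any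
continuous F on (0, ∞) with F(λ) → 0 as λ → 0⁺ there are n₀ and ηₙ ∈ (−π/2, π/2), ηₙ → 0,
such that λₙ := λₙ⁰e^{ηₙ/β} solves the matching equation
−a sin(θ_β − β ln(λₙr₀/2)) + b cos(θ_β − β ln(λₙr₀/2)) = F(λₙ) for all n ≥ n₀. -/
theorem stmt2 (β r₀ θβ a b : ℝ) (hβ : 0 < β) (hr₀ : 0 < r₀)
    (hab : (a, b) ≠ (0, 0))
    (F : ℝ → ℝ) (hFcont : ContinuousOn F (Set.Ioi 0))
    (hF0 : Tendsto F (nhdsWithin 0 (Set.Ioi 0)) (nhds 0)) :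
    ∃ (n₀ : ℕ) (η : ℕ → ℝ),
      (∀ n, n₀ ≤ n → η n ∈ Set.Ioo (-(Real.pi / 2)) (Real.pi / 2)) ∧
      Tendsto η atTop (nhds 0) ∧
      (∀ n, n₀ ≤ n →
        -a * Real.sin (θβ - β * Real.log
            (((2 / r₀) * Real.exp ((θβ - (if a = 0 then Real.pi / 2 else Real.arctan (b / a))) / β)
              * Real.exp (-(n : ℝ) * Real.pi / β) * Real.exp (η n / β)) * r₀ / 2))
        + b * Real.cos (θβ - β * Real.log
            (((2 / r₀) * Real.exp ((θβ - (if a = 0 then Real.pi / 2 else Real.arctan (b / a))) / β)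
              * Real.exp (-(n : ℝ) * Real.pi / β) * Real.exp (η n / β)) * r₀ / 2))
        = F ((2 / r₀) * Real.exp ((θβ - (if a = 0 then Real.pi / 2 else Real.arctan (b / a))) / β)
              * Real.exp (-(n : ℝ) * Real.pi / β) * Real.exp (η n / β))) := by
  rw [show (if a = 0 then π / 2 else arctan (b / a)) = phaseAngle a b from rfl]
  set K := 2 / r₀ * exp ((θβ - phaseAngle a b) / β)
  have hK : 0 < K := by positivity
  have hphase (n : ℕ) (t : ℝ) :
      θβ - β * log (K * exp (-(n : ℝ) * π / β) * exp (t / β) * r₀ / 2) =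
        phaseAngle a b - t + n * π := by
    have hexp : K * exp (-(n : ℝ) * π / β) * exp (t / β) * r₀ / 2 =
        exp ((θβ - phaseAngle a b) / β + -(n : ℝ) * π / β + t / β) := by
      simp only [K, exp_add]
      field_simp
    rw [hexp, log_exp]
    field_simp
    ring
  have hL : Tendsto (fun p : ℕ × ℝ => K * exp (-(p.1 : ℝ) * π / β) * exp (p.2 / β))
      (atTop ×ˢ 𝓟 (Icc (-(π / 2)) (π / 2))) (𝓝[>] 0) := by
    refine tendsto_nhdsWithin_iff.2 ⟨?_, Eventually.of_forall fun p => mem_Ioi.2 (by positivity)⟩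
    simpa [mul_assoc] using (tendsto_exp_neg_nat_mul_pi_mul_exp hβ bddAbove_Icc).const_mul K
  obtain ⟨n₀, η, hη_mem, hη_lim, hη_eq⟩ := exists_seq_mul_sin_eq
    (d := fun n => (-1) ^ n * (a * cos (phaseAngle a b) + b * sin (phaseAngle a b)))
    (f := fun n t => F (K * exp (-(n : ℝ) * π / β) * exp (t / β)))
    (abs_pos.2 (mul_cos_phaseAngle_add_mul_sin_ne_zero hab)) (fun n => by simp)
    (fun n => hFcont.comp (by fun_prop) fun t _ => mem_Ioi.2 (by positivity)) (hF0.comp hL)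
  refine ⟨n₀, η, hη_mem, hη_lim, fun n hn => ?_⟩
  rw [hphase, neg_mul_sin_add_mul_cos_sub_add_nat_mul_pi (neg_mul_sin_phaseAngle_add_mul_cos a b)]
  exact hη_eq n hn
end

section
/- Let ν > 0, r > 0, t ∈ ℝ and λ ≥ 0, and set s := √(νλ)·r + t. Then t/r + √(νλ) − e^{−√(νλ)·r}/r = 0 if and only if s·e^s = e^t. -/
/-- with s := √(νλ)·r + t, the eigenvalue equation
t/r + √(νλ) − e^{−√(νλ)·r}/r = 0 is equivalent to the Lambert-type equation s·e^s = e^t. -/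
theorem stmt4 (ν r t lam : ℝ) (hν : 0 < ν) (hr : 0 < r) (hlam : 0 ≤ lam) :
    t / r + Real.sqrt (ν * lam) - Real.exp (-(Real.sqrt (ν * lam)) * r) / r = 0 ↔
    (Real.sqrt (ν * lam) * r + t) * Real.exp (Real.sqrt (ν * lam) * r + t) = Real.exp t := by
  set a := Real.sqrt (ν * lam) with ha
  have h1 : t / r + a - Real.exp (-a * r) / r = 0 ↔ a * r + t = Real.exp (-(a * r)) := by
    rw [div_add' _ _ _ hr.ne', div_sub_div_same, div_eq_zero_iff]
    constructor
    · rintro (h | h)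
      · have := sub_eq_zero.mp h
        rw [neg_mul] at this; linarith
      · exact absurd h hr.ne'
    · intro h; left; rw [neg_mul]; linarith
  rw [h1]
  constructor
  · intro h
    rw [Real.exp_add, h, ← mul_assoc, ← Real.exp_add, neg_add_cancel, Real.exp_zero, one_mul]
  · intro h
    have := congrArg (· * Real.exp (-(a * r + t))) h
    simp only [mul_assoc, ← Real.exp_add] at this
    rw [add_neg_cancel, Real.exp_zero, mul_one] at this
    rw [this]; ring_nf
end

section
/- Let θ : [0, ∞) → ℝ be differentiable at 0 with θ(0) = 1, and for r ≥ 0 let s(r) be the unique s ∈ [−1, ∞) with s·e^s = e^{θ(r)}. Then (s(r) − θ(r))/r → −θ'(0)/2 as r → 0⁺; consequently, for any ν > 0, the function 𝓔(r) := −(s(r) − θ(r))²/(ν r²) tends to the finite limit −θ'(0)²/(4ν) as r → 0⁺. -/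
/-!
Write `φ x = x * exp x`, so that `s = W ∘ exp ∘ θ` with `W` the inverse of `φ` on `[-1, ∞)`.
Since `φ' (1) = 2e ≠ 0`, the inverse function theorem makes `W` differentiable at `e = φ 1`, and
the chain rule gives `s' (0) = (2e)⁻¹ · e · θ'(0) = θ'(0)/2`. Hence `s - θ` vanishes at `0` with
derivative `-θ'(0)/2`, which is the limit of `(s r - θ r)/r`; the second limit follows by squaring.
-/

open Filter Set Topology Real

theorem hasDerivWithinAt_of_comp_eq {𝕜 : Type*} [NontriviallyNormedField 𝕜] [CompleteSpace 𝕜]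
    {φ u v : 𝕜 → 𝕜} {φ' v' a : 𝕜} {s t : Set 𝕜}
    (hφ : HasStrictDerivAt φ φ' (u a)) (hφ' : φ' ≠ 0) (hinj : InjOn φ t) (ht : t ∈ 𝓝 (u a))
    (hut : MapsTo u s t) (huv : ∀ r ∈ s, φ (u r) = v r) (ha : a ∈ s)
    (hv : HasDerivWithinAt v v' s a) : HasDerivWithinAt u (φ'⁻¹ * v') s a := by
  set g := hφ.localInverse φ φ' (u a) hφ'
  have hg : HasStrictDerivAt g φ'⁻¹ (φ (u a)) := hφ.to_localInverse hφ'
  have hva : v a = φ (u a) := (huv a ha).symm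
  have hgu : g (φ (u a)) = u a := (hφ.eventually_left_inverse hφ').self_of_nhds
  have hvt : Tendsto v (𝓝[s] a) (𝓝 (φ (u a))) := by
    simpa [ContinuousWithinAt, hva] using hv.continuousWithinAt
  have hg_mem : ∀ᶠ y in 𝓝 (φ (u a)), g y ∈ t :=
    hg.hasDerivAt.continuousAt.preimage_mem_nhds (by rwa [hgu])
  have hu_eq : u =ᶠ[𝓝[s] a] g ∘ v := by
    filter_upwards [hvt.eventually hg_mem, hvt.eventually (hφ.eventually_right_inverse hφ'),
      self_mem_nhdsWithin] with r hgt hφg hr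
    exact hinj (hut hr) hgt (by rw [huv r hr, Function.comp_apply, hφg])
  have hgv : HasDerivWithinAt (g ∘ v) (φ'⁻¹ * v') s a := by
    rw [← hva] at hg
    exact hg.hasDerivAt.comp_hasDerivWithinAt a hv
  exact hgv.congr_of_eventuallyEq hu_eq (by rw [Function.comp_apply, hva, hgu])

theorem tendsto_div_nhdsGT_zero_of_hasDerivWithinAt {f : ℝ → ℝ} {f' : ℝ}
    (hf : HasDerivWithinAt f f' (Ici 0) 0) (h0 : f 0 = 0) :
    Tendsto (fun r => f r / r) (𝓝[>] 0) (𝓝 f') := by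
  have h := (hasDerivWithinAt_iff_tendsto_slope' (lt_irrefl 0)).1 hf.Ioi_of_Ici
  refine h.congr fun r => ?_
  rw [slope_def_field, h0, sub_zero, sub_zero]

theorem hasStrictDerivAt_mul_exp (x : ℝ) :
    HasStrictDerivAt (fun x => x * exp x) ((1 + x) * exp x) x :=
  ((hasStrictDerivAt_id x).mul (hasStrictDerivAt_exp x)).congr_deriv (by rw [id]; ring)

theorem strictMonoOn_mul_exp : StrictMonoOn (fun x => x * exp x) (Ici (-1)) := by
  refine strictMonoOn_of_deriv_pos (convex_Ici _) (by fun_prop) fun x hx => ?_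
  rw [interior_Ici, mem_Ioi] at hx
  rw [(hasStrictDerivAt_mul_exp x).hasDerivAt.deriv]
  have : 0 < 1 + x := by linarith
  positivity

theorem eq_one_of_mul_exp_eq_exp_one {x : ℝ} (hx : -1 ≤ x) (h : x * exp x = exp 1) : x = 1 :=
  strictMonoOn_mul_exp.injOn hx (show (-1 : ℝ) ≤ 1 by norm_num) (by simpa using h)

theorem hasDerivWithinAt_of_mul_exp_eq_exp {u θ : ℝ → ℝ} {θ' a : ℝ} {s : Set ℝ}
    (hθ : HasDerivWithinAt θ θ' s a) (hu : ∀ r ∈ s, -1 ≤ u r)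
    (huθ : ∀ r ∈ s, u r * exp (u r) = exp (θ r)) (ha : a ∈ s) (hua : -1 < u a) :
    HasDerivWithinAt u (u a / (1 + u a) * θ') s a := by
  have hpos : 0 < 1 + u a := by linarith
  have h := hasDerivWithinAt_of_comp_eq (hasStrictDerivAt_mul_exp (u a)) (by positivity)
    strictMonoOn_mul_exp.injOn (Ici_mem_nhds hua) hu huθ ha hθ.exp
  rwa [← huθ a ha, show ((1 + u a) * exp (u a))⁻¹ * (u a * exp (u a) * θ') =
    u a / (1 + u a) * θ' by field_simp] at h

/-- if θ is differentiable (from the right) at 0 with θ(0) = 1 and derivative θ',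
and s(r) = W(e^{θ(r)}) is the unique s ∈ [−1, ∞) with s·e^s = e^{θ(r)}, then
(s(r) − θ(r))/r → −θ'/2 as r → 0⁺, and for every ν > 0 the effective potential
𝓔(r) = −(s(r) − θ(r))²/(νr²) tends to the finite limit −θ'²/(4ν) as r → 0⁺. -/
theorem stmt7 (θ : ℝ → ℝ) (θ' : ℝ) (hθdiff : HasDerivWithinAt θ θ' (Set.Ici 0) 0)
    (hθ0 : θ 0 = 1)
    (s : ℝ → ℝ) (hs1 : ∀ r ∈ Set.Ici (0 : ℝ), -1 ≤ s r)
    (hs2 : ∀ r ∈ Set.Ici (0 : ℝ), s r * Real.exp (s r) = Real.exp (θ r)) :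
    Tendsto (fun r => (s r - θ r) / r) (nhdsWithin 0 (Set.Ioi 0)) (nhds (-θ' / 2)) ∧
    (∀ ν : ℝ, 0 < ν →
      Tendsto (fun r => -(s r - θ r) ^ 2 / (ν * r ^ 2)) (nhdsWithin 0 (Set.Ioi 0))
        (nhds (-θ' ^ 2 / (4 * ν)))) := by
  have h0 : (0 : ℝ) ∈ Ici 0 := self_mem_Ici
  have hs0 : s 0 = 1 := eq_one_of_mul_exp_eq_exp_one (hs1 0 h0) (by rw [hs2 0 h0, hθ0])
  have hs : HasDerivWithinAt s (θ' / 2) (Ici 0) 0 := by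
    refine (hasDerivWithinAt_of_mul_exp_eq_exp hθdiff hs1 hs2 h0 ?_).congr_deriv ?_
    · rw [hs0]; norm_num
    · rw [hs0]; ring
  have hsθ : HasDerivWithinAt (fun r => s r - θ r) (-θ' / 2) (Ici 0) 0 :=
    (hs.sub hθdiff).congr_deriv (by ring)
  have hlim := tendsto_div_nhdsGT_zero_of_hasDerivWithinAt hsθ (by rw [hs0, hθ0, sub_self])
  refine ⟨hlim, fun ν _ => ?_⟩
  rw [show -θ' ^ 2 / (4 * ν) = -(-θ' / 2) ^ 2 / ν by ring]
  refine ((hlim.pow 2).neg.div_const ν).congr fun r => ?_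
  rw [div_pow]
  ring
end
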